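/- Let f : [1, +∞) → ℝ be a C²-smooth function with f(x) > 0, f''(x) > 0 and f'(x) < 0 for all x ≥ 1, and such that f(x) → 0 and f'(x) → 0 as x → +∞. Then the improper integral ∫₁^{+∞} (f''(x))^{2/3} (1 + f'(x)²)^{−1/2} dx converges; i.e. the Lazutkin length of the strictly convex curve {y = f(x), x ≥ 1} is finite. -/

import Mathlib

/-!
With `f'' > 0`, weighted AM-GM gives `f''(x)^{2/3} ≤ x f''(x) + x⁻²`, and the integrand is at most
`f''^{2/3}`. Now `x f''(x)` is the derivative of `H(x) = x f'(x) - f(x)`, which is nondecreasing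
and, since `f' < 0 < f`, bounded above by `0`; so `x f''` is integrable on `[1, ∞)`, and so is
`x⁻²`.
-/

open Set Filter MeasureTheory

theorem rpow_two_thirds_le_mul_add_rpow_neg_two {a x : ℝ} (ha : 0 ≤ a) (hx : 0 < x) :
    a ^ ((2:ℝ)/3) ≤ x * a + x ^ (-2:ℝ) := by
  have hax : 0 ≤ a * x := mul_nonneg ha hx.le
  have hx2 : 0 ≤ x ^ (-2:ℝ) := Real.rpow_nonneg hx.le _
  have hsplit : (a * x) ^ ((2:ℝ)/3) * (x ^ (-2:ℝ)) ^ ((1:ℝ)/3) = a ^ ((2:ℝ)/3) := by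
    rw [Real.mul_rpow ha hx.le, ← Real.rpow_mul hx.le, mul_assoc, ← Real.rpow_add hx]
    norm_num
  calc a ^ ((2:ℝ)/3)
      = (a * x) ^ ((2:ℝ)/3) * (x ^ (-2:ℝ)) ^ ((1:ℝ)/3) := hsplit.symm
    _ ≤ 2/3 * (a * x) + 1/3 * x ^ (-2:ℝ) :=
        Real.geom_mean_le_arith_mean2_weighted (by norm_num) (by norm_num) hax hx2 (by norm_num)
    _ ≤ x * a + x ^ (-2:ℝ) := by linarith [mul_comm a x]

theorem integrableOn_Ioi_deriv_of_nonneg_of_le {g g' : ℝ → ℝ} {a C : ℝ}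
    (hcont : ContinuousOn g (Ici a)) (hderiv : ∀ x ∈ Ioi a, HasDerivAt g (g' x) x)
    (g'pos : ∀ x ∈ Ioi a, 0 ≤ g' x) (hle : ∀ x ∈ Ioi a, g x ≤ C) :
    IntegrableOn g' (Ioi a) := by
  have hloc : ∀ b, a ≤ b → IntegrableOn g' (Ioc a b) := fun b hab =>
    intervalIntegral.integrableOn_deriv_of_nonneg (hcont.mono Icc_subset_Ici_self)
      (fun x hx => hderiv x hx.1) (fun x hx => g'pos x hx.1)
  refine integrableOn_Ioi_of_intervalIntegral_norm_bounded (C - g a) a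
    (b := id) (l := atTop) (fun b => ?_) tendsto_id ?_
  · rcases le_or_gt a b with hab | hba
    · exact hloc b hab
    · simp [Ioc_eq_empty_of_le hba.le]
  · filter_upwards [eventually_gt_atTop a] with b hab
    have hnorm : ∫ x in a..b, ‖g' x‖ = ∫ x in a..b, g' x :=
      intervalIntegral.integral_congr_ae <| .of_forall fun x hx =>
        Real.norm_of_nonneg (g'pos x (by rw [uIoc_of_le hab.le] at hx; exact hx.1))
    rw [id, hnorm, intervalIntegral.integral_eq_sub_of_hasDerivAt_of_le hab.le
      (hcont.mono Icc_subset_Ici_self) (fun x hx => hderiv x hx.1)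
      ((intervalIntegrable_iff_integrableOn_Ioc_of_le hab.le).2 (hloc b hab.le))]
    linarith [hle b hab]

theorem rpow_two_thirds_mul_rpow_neg_half_le {a x : ℝ} (b : ℝ) (ha : 0 ≤ a) (hx : 0 < x) :
    a ^ ((2:ℝ)/3) * (1 + b ^ 2) ^ (-(1:ℝ)/2) ≤ x * a + x ^ (-2:ℝ) :=
  calc a ^ ((2:ℝ)/3) * (1 + b ^ 2) ^ (-(1:ℝ)/2)
      ≤ a ^ ((2:ℝ)/3) :=
        mul_le_of_le_one_right (by positivity)
          (Real.rpow_le_one_of_one_le_of_nonpos (by nlinarith) (by norm_num))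
    _ ≤ x * a + x ^ (-2:ℝ) := rpow_two_thirds_le_mul_add_rpow_neg_two ha hx

theorem HasDerivAt.id_mul_deriv_sub {f f' : ℝ → ℝ} {x b : ℝ} (hf : HasDerivAt f (f' x) x)
    (hf' : HasDerivAt f' b x) : HasDerivAt (fun y => y * f' y - f y) (x * b) x :=
  (((hasDerivAt_id' x).mul hf').sub hf).congr_deriv (by ring)

theorem statement16_general (f : ℝ → ℝ)
    (hf : ContDiffOn ℝ 2 f (Set.Ici 1))
    (hfpos : ∀ x ∈ Set.Ici (1:ℝ), 0 < f x)
    (hf''pos : ∀ x ∈ Set.Ici (1:ℝ),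
      0 < derivWithin (derivWithin f (Set.Ici 1)) (Set.Ici 1) x)
    (hf'neg : ∀ x ∈ Set.Ici (1:ℝ), derivWithin f (Set.Ici 1) x < 0) :
    IntegrableOn
      (fun x => (derivWithin (derivWithin f (Set.Ici 1)) (Set.Ici 1) x) ^ ((2:ℝ)/3) *
        (1 + (derivWithin f (Set.Ici 1) x) ^ 2) ^ (-(1:ℝ)/2))
      (Set.Ici 1) := by
  set f' := derivWithin f (Ici 1)
  set f'' := derivWithin f' (Ici 1)
  have hf' : ContDiffOn ℝ 1 f' (Ici 1) := hf.derivWithin (uniqueDiffOn_Ici 1) (by norm_num)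
  have hmoment : IntegrableOn (fun x => x * f'' x) (Ioi 1) := by
    refine integrableOn_Ioi_deriv_of_nonneg_of_le (g := fun y => y * f' y - f y) (C := 0)
      ((continuousOn_id.mul hf'.continuousOn).sub hf.continuousOn) (fun x hx => ?_)
      (fun x hx => mul_nonneg (by linarith [mem_Ioi.1 hx]) (hf''pos x hx.out.le).le)
      (fun x hx => by nlinarith [hfpos x hx.out.le, hf'neg x hx.out.le, mem_Ioi.1 hx])
    have hnhds : Ici (1:ℝ) ∈ nhds x := Ici_mem_nhds hx
    exact HasDerivAt.id_mul_deriv_sub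
      ((hf.differentiableOn (by norm_num) x hx.out.le).hasDerivWithinAt.hasDerivAt hnhds)
      ((hf'.differentiableOn one_ne_zero x hx.out.le).hasDerivWithinAt.hasDerivAt hnhds)
  have hdom : IntegrableOn (fun x : ℝ => x * f'' x + x ^ (-2:ℝ)) (Ici 1) := by
    rw [integrableOn_Ici_iff_integrableOn_Ioi]
    exact hmoment.add (integrableOn_Ioi_rpow_of_lt (by norm_num) one_pos)
  have hcont : ContinuousOn (fun x => f'' x ^ ((2:ℝ)/3) * (1 + f' x ^ 2) ^ (-(1:ℝ)/2)) (Ici 1) :=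
    ((hf'.continuousOn_derivWithin (uniqueDiffOn_Ici 1) le_rfl).rpow_const
      fun x hx => .inl (hf''pos x hx).ne').mul <|
    (continuousOn_const.add (hf'.continuousOn.pow 2)).rpow_const
      fun x _ => .inl (by positivity : (0:ℝ) < 1 + f' x ^ 2).ne'
  refine hdom.mono' (hcont.aestronglyMeasurable measurableSet_Ici) <|
    (ae_restrict_iff' measurableSet_Ici).2 <| .of_forall fun x hx => ?_
  rw [Real.norm_of_nonneg (by have := (hf''pos x hx).le; positivity)]
  exact rpow_two_thirds_mul_rpow_neg_half_le _ (hf''pos x hx).le (by linarith [mem_Ici.1 hx])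

/-- Let `f : [1,∞) → ℝ` be `C²` with `f > 0`, `f'' > 0`, `f' < 0` on
`[1,∞)` and `f(x) → 0`, `f'(x) → 0` as `x → +∞`. Then the Lazutkin length of the curve
`{y = f(x), x ≥ 1}`, namely `∫₁^∞ (f''(x))^{2/3} (1 + f'(x)²)^{−1/2} dx`, is finite.
(Here `f' = derivWithin f [1,∞)` and `f'' = derivWithin f' [1,∞)`.) -/
theorem statement16 (f : ℝ → ℝ)
    (hf : ContDiffOn ℝ 2 f (Set.Ici 1))
    (hfpos : ∀ x ∈ Set.Ici (1:ℝ), 0 < f x)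
    (hf''pos : ∀ x ∈ Set.Ici (1:ℝ),
      0 < derivWithin (derivWithin f (Set.Ici 1)) (Set.Ici 1) x)
    (hf'neg : ∀ x ∈ Set.Ici (1:ℝ), derivWithin f (Set.Ici 1) x < 0)
    (hlim : Tendsto f atTop (nhds 0))
    (hlim' : Tendsto (derivWithin f (Set.Ici 1)) atTop (nhds 0)) :
    IntegrableOn
      (fun x => (derivWithin (derivWithin f (Set.Ici 1)) (Set.Ici 1) x) ^ ((2:ℝ)/3) *
        (1 + (derivWithin f (Set.Ici 1) x) ^ 2) ^ (-(1:ℝ)/2))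
      (Set.Ici 1) :=
  statement16_general f hf hfpos hf''pos hf'neg
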